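/- The map ψ_T is a birational involution of ℙ²(ℂ) (there exists a nonzero homogeneous polynomial μ of degree 3 with ψ_{Ti}(ψ_T(b)) = μ(b)·bᵢ for i = 0, 1, 2), and it lifts the coordinate swap of ℙ¹×ℙ¹ through Φ̃: the identity Φ̃ ∘ ψ_T = s ∘ Φ̃ holds as rational maps ℙ² ⇢ ℙ¹×ℙ¹, where s(z, w) = (w, z); i.e. writing Φ̃ = (Φ̃₁, Φ̃₂) in affine coordinates, Φ̃₁(ψ_T(b)) = Φ̃₂(b) and Φ̃₂(ψ_T(b)) = Φ̃₁(b) wherever both sides are defined. -/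

import Mathlib

/-!
Both parts are polynomial identities. Composing `ψ_T` with itself multiplies every coordinate
by the cubic `μ = -t²(t-1)²(t-λ)² (λb₀ - (1+λ)b₁ + b₂)(b₂ - b₁)(b₂ - λb₁)`, a constant times
three lines; `μ ≠ 0` because its value at `(0 : 0 : 1)` is that constant. The two lifting
identities become polynomial identities after cross-multiplying the denominators.
-/

/-- First affine coordinate of `Φ̃`. -/
noncomputable def Phi1 (t b₀ b₁ b₂ : ℂ) : ℂ := (b₁ * t - b₂) / (b₀ * t - b₁)

/-- Second affine coordinate of `Φ̃`. -/
noncomputable def Phi2 (l b₀ b₁ b₂ : ℂ) : ℂ :=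
  -b₁ * (b₀ * l - b₁ * l - b₁ + b₂) / (b₁ ^ 2 - b₀ * b₂)

/-- First component of the involution `ψ_T`. -/
noncomputable def psiT0 (l t b₀ b₁ b₂ : ℂ) : ℂ :=
  (-l - t ^ 2) * b₁ ^ 2 - b₂ ^ 2 + l * t * b₀ * b₁ + (t ^ 2 - t - l * t) * b₀ * b₂
    + (l + t + 1) * b₁ * b₂

/-- Second component of the involution `ψ_T`. -/
noncomputable def psiT1 (l t b₀ b₁ b₂ : ℂ) : ℂ :=
  t * (l * b₀ - (1 + l) * b₁ + b₂) * (t * b₁ - b₂)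

/-- Third component of the involution `ψ_T`. -/
noncomputable def psiT2 (l t b₀ b₁ b₂ : ℂ) : ℂ :=
  t * ((t - l + l * t) * b₁ - t * b₂) * (l * b₀ - (1 + l) * b₁ + b₂)

open MvPolynomial

section LinearForm

variable {σ R : Type*} [CommSemiring R] [Fintype σ]

noncomputable def linearForm (a : σ → R) : MvPolynomial σ R := ∑ i, C (a i) * X i

theorem isHomogeneous_linearForm (a : σ → R) : (linearForm a).IsHomogeneous 1 :=
  IsHomogeneous.sum _ _ _ fun i _ => isHomogeneous_C_mul_X (a i) i

theorem eval_linearForm (a b : σ → R) : eval b (linearForm a) = ∑ i, a i * b i := by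
  simp [linearForm]

end LinearForm

noncomputable def psiTMultiplier (l t : ℂ) : MvPolynomial (Fin 3) ℂ :=
  C (-(t ^ 2 * (t - 1) ^ 2 * (t - l) ^ 2)) *
    (linearForm ![l, -(1 + l), 1] * linearForm ![0, -1, 1] * linearForm ![0, -l, 1])

theorem eval_psiTMultiplier (l t b₀ b₁ b₂ : ℂ) :
    eval ![b₀, b₁, b₂] (psiTMultiplier l t) =
      -(t ^ 2 * (t - 1) ^ 2 * (t - l) ^ 2) *
        ((l * b₀ - (1 + l) * b₁ + b₂) * (b₂ - b₁) * (b₂ - l * b₁)) := by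
  simp only [psiTMultiplier, eval_mul, eval_C, eval_linearForm, Fin.sum_univ_three,
    Matrix.cons_val_zero, Matrix.cons_val_one, Matrix.cons_val_two, Matrix.head_cons,
    Matrix.tail_cons]
  ring

theorem psiTMultiplier_ne_zero {l t : ℂ} (ht0 : t ≠ 0) (ht1 : t ≠ 1) (htl : t ≠ l) :
    psiTMultiplier l t ≠ 0 := by
  intro h
  have hc : t ^ 2 * (t - 1) ^ 2 * (t - l) ^ 2 ≠ 0 := by
    simp [ht0, sub_ne_zero.2 ht1, sub_ne_zero.2 htl]
  have h001 := eval_psiTMultiplier l t 0 0 1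
  rw [h, map_zero] at h001
  exact hc (by linear_combination h001)

theorem isHomogeneous_psiTMultiplier (l t : ℂ) : (psiTMultiplier l t).IsHomogeneous 3 :=
  (((isHomogeneous_linearForm _).mul (isHomogeneous_linearForm _)).mul
    (isHomogeneous_linearForm _)).C_mul _

theorem psiT_psiT (l t b₀ b₁ b₂ : ℂ) :
    psiT0 l t (psiT0 l t b₀ b₁ b₂) (psiT1 l t b₀ b₁ b₂) (psiT2 l t b₀ b₁ b₂) =
        eval ![b₀, b₁, b₂] (psiTMultiplier l t) * b₀ ∧
      psiT1 l t (psiT0 l t b₀ b₁ b₂) (psiT1 l t b₀ b₁ b₂) (psiT2 l t b₀ b₁ b₂) =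
        eval ![b₀, b₁, b₂] (psiTMultiplier l t) * b₁ ∧
      psiT2 l t (psiT0 l t b₀ b₁ b₂) (psiT1 l t b₀ b₁ b₂) (psiT2 l t b₀ b₁ b₂) =
        eval ![b₀, b₁, b₂] (psiTMultiplier l t) * b₂ := by
  simp only [eval_psiTMultiplier, psiT0, psiT1, psiT2]
  refine ⟨?_, ?_, ?_⟩ <;> ring

theorem Phi1_psiT {l t b₀ b₁ b₂ : ℂ} (hψ : psiT0 l t b₀ b₁ b₂ * t - psiT1 l t b₀ b₁ b₂ ≠ 0)
    (hb : b₁ ^ 2 - b₀ * b₂ ≠ 0) :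
    Phi1 t (psiT0 l t b₀ b₁ b₂) (psiT1 l t b₀ b₁ b₂) (psiT2 l t b₀ b₁ b₂) =
      Phi2 l b₀ b₁ b₂ := by
  rw [Phi1, Phi2, div_eq_div_iff hψ hb]
  simp only [psiT0, psiT1, psiT2]
  ring

theorem Phi2_psiT {l t b₀ b₁ b₂ : ℂ}
    (hψ : psiT1 l t b₀ b₁ b₂ ^ 2 - psiT0 l t b₀ b₁ b₂ * psiT2 l t b₀ b₁ b₂ ≠ 0)
    (hb : b₀ * t - b₁ ≠ 0) :
    Phi2 l (psiT0 l t b₀ b₁ b₂) (psiT1 l t b₀ b₁ b₂) (psiT2 l t b₀ b₁ b₂) =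
      Phi1 t b₀ b₁ b₂ := by
  rw [Phi2, Phi1, div_eq_div_iff hψ hb]
  simp only [psiT0, psiT1, psiT2]
  ring

theorem psiT_involution_lifts_swap_general (l t : ℂ)
    (ht0 : t ≠ 0) (ht1 : t ≠ 1) (htl : t ≠ l) :
    (∃ μ : MvPolynomial (Fin 3) ℂ, μ ≠ 0 ∧ μ.IsHomogeneous 3 ∧
      ∀ b₀ b₁ b₂ : ℂ,
        psiT0 l t (psiT0 l t b₀ b₁ b₂) (psiT1 l t b₀ b₁ b₂) (psiT2 l t b₀ b₁ b₂) =
            MvPolynomial.eval ![b₀, b₁, b₂] μ * b₀ ∧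
        psiT1 l t (psiT0 l t b₀ b₁ b₂) (psiT1 l t b₀ b₁ b₂) (psiT2 l t b₀ b₁ b₂) =
            MvPolynomial.eval ![b₀, b₁, b₂] μ * b₁ ∧
        psiT2 l t (psiT0 l t b₀ b₁ b₂) (psiT1 l t b₀ b₁ b₂) (psiT2 l t b₀ b₁ b₂) =
            MvPolynomial.eval ![b₀, b₁, b₂] μ * b₂) ∧
    ∀ b₀ b₁ b₂ : ℂ,
      b₀ * t - b₁ ≠ 0 → b₁ ^ 2 - b₀ * b₂ ≠ 0 →
      psiT0 l t b₀ b₁ b₂ * t - psiT1 l t b₀ b₁ b₂ ≠ 0 →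
      psiT1 l t b₀ b₁ b₂ ^ 2 - psiT0 l t b₀ b₁ b₂ * psiT2 l t b₀ b₁ b₂ ≠ 0 →
      Phi1 t (psiT0 l t b₀ b₁ b₂) (psiT1 l t b₀ b₁ b₂) (psiT2 l t b₀ b₁ b₂) =
          Phi2 l b₀ b₁ b₂ ∧
      Phi2 l (psiT0 l t b₀ b₁ b₂) (psiT1 l t b₀ b₁ b₂) (psiT2 l t b₀ b₁ b₂) =
          Phi1 t b₀ b₁ b₂ := by
  refine ⟨⟨psiTMultiplier l t, psiTMultiplier_ne_zero ht0 ht1 htl,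
    isHomogeneous_psiTMultiplier l t, psiT_psiT l t⟩, ?_⟩
  intro b₀ b₁ b₂ hΦ₁ hΦ₂ hψΦ₁ hψΦ₂
  exact ⟨Phi1_psiT hψΦ₁ hΦ₂, Phi2_psiT hψΦ₂ hΦ₁⟩

/-- `ψ_T` is a birational involution of `ℙ²(ℂ)` (there is a nonzero homogeneous `μ` of
degree 3 with `ψ_{Ti}(ψ_T(b)) = μ(b)·bᵢ` for `i = 0, 1, 2`), and it lifts the coordinate
swap `s(z, w) = (w, z)` of `ℙ¹×ℙ¹` through `Φ̃`: in affine coordinates,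
`Φ̃₁(ψ_T(b)) = Φ̃₂(b)` and `Φ̃₂(ψ_T(b)) = Φ̃₁(b)` wherever both sides are defined. -/
theorem psiT_involution_lifts_swap (l t : ℂ) (hl0 : l ≠ 0) (hl1 : l ≠ 1)
    (ht0 : t ≠ 0) (ht1 : t ≠ 1) (htl : t ≠ l) :
    (∃ μ : MvPolynomial (Fin 3) ℂ, μ ≠ 0 ∧ μ.IsHomogeneous 3 ∧
      ∀ b₀ b₁ b₂ : ℂ,
        psiT0 l t (psiT0 l t b₀ b₁ b₂) (psiT1 l t b₀ b₁ b₂) (psiT2 l t b₀ b₁ b₂) =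
            MvPolynomial.eval ![b₀, b₁, b₂] μ * b₀ ∧
        psiT1 l t (psiT0 l t b₀ b₁ b₂) (psiT1 l t b₀ b₁ b₂) (psiT2 l t b₀ b₁ b₂) =
            MvPolynomial.eval ![b₀, b₁, b₂] μ * b₁ ∧
        psiT2 l t (psiT0 l t b₀ b₁ b₂) (psiT1 l t b₀ b₁ b₂) (psiT2 l t b₀ b₁ b₂) =
            MvPolynomial.eval ![b₀, b₁, b₂] μ * b₂) ∧
    ∀ b₀ b₁ b₂ : ℂ,
      b₀ * t - b₁ ≠ 0 → b₁ ^ 2 - b₀ * b₂ ≠ 0 →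
      psiT0 l t b₀ b₁ b₂ * t - psiT1 l t b₀ b₁ b₂ ≠ 0 →
      psiT1 l t b₀ b₁ b₂ ^ 2 - psiT0 l t b₀ b₁ b₂ * psiT2 l t b₀ b₁ b₂ ≠ 0 →
      Phi1 t (psiT0 l t b₀ b₁ b₂) (psiT1 l t b₀ b₁ b₂) (psiT2 l t b₀ b₁ b₂) =
          Phi2 l b₀ b₁ b₂ ∧
      Phi2 l (psiT0 l t b₀ b₁ b₂) (psiT1 l t b₀ b₁ b₂) (psiT2 l t b₀ b₁ b₂) =
          Phi1 t b₀ b₁ b₂ :=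
  psiT_involution_lifts_swap_general l t ht0 ht1 htl
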